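/- arXiv:math/0601430 — 3 statements merged into one kernel-verified Lean document; each statement's English description precedes it below -/
import Mathlib

section
/- Let U ⊆ ℂ be an open disk centered at 0 and h : U → ℂ analytic with h(z) ≠ 0 for all z ∈ U. Consider the differential equation dz/dt = i/(z·h(z)) on U ∖ {0}. Then there exist an open disk Ũ ⊆ U containing 0 and a biholomorphic map ξ : Ũ → ξ(Ũ) with ξ(0) = 0 such that, setting ω = √2·ξ(z), the equation transforms to dω/dt = 1/ω on ξ(Ũ) ∖ {0}. -/
/-!
A primitive `F` of `-i z h(z)` with `F(0) = 0` vanishes to order exactly two at `0`, so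
`F = z² G` with `G(0) ≠ 0`. A holomorphic square root `g` of `G` gives `ξ = z g` with `ξ² = F`
and `ξ'(0) = g(0) ≠ 0`, so `ξ` is biholomorphic near `0` by the inverse function theorem.
Along a solution of `dz/dt = i/(z h(z))`, differentiating `ξ(z)² = F(z)` gives
`2 ξ dξ/dt = -i z h(z) · i/(z h(z)) = 1`, which is `dω/dt = 1/ω` for `ω = √2 ξ`.
-/

open Complex Metric Filter Topology Set

theorem HasStrictFDerivAt.exists_mem_nhds_injOn_isOpen_image
    {𝕜 E F : Type*} [NontriviallyNormedField 𝕜] [NormedAddCommGroup E] [NormedSpace 𝕜 E]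
    [CompleteSpace E] [NormedAddCommGroup F] [NormedSpace 𝕜 F] {f : E → F} {f' : E ≃L[𝕜] F}
    {a : E} (hf : HasStrictFDerivAt f (f' : E →L[𝕜] F) a) :
    ∃ U ∈ 𝓝 a, InjOn f U ∧ ∀ V ⊆ U, IsOpen V → IsOpen (f '' V) := by
  set e := hf.toOpenPartialHomeomorph f
  have he : (e : E → F) = f := hf.toOpenPartialHomeomorph_coe
  exact ⟨e.source, e.open_source.mem_nhds hf.mem_toOpenPartialHomeomorph_source, he ▸ e.injOn,
    fun V hV hVo => he ▸ e.isOpen_image_of_subset_source hVo hV⟩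

theorem exists_eq_pow_succ_mul_of_hasDerivAt {F k : ℂ → ℂ} {c : ℂ} {n : ℕ}
    (hk : AnalyticAt ℂ k c) (hkc : k c ≠ 0) (hFc : F c = 0)
    (hF : ∀ᶠ z in 𝓝 c, HasDerivAt F ((z - c) ^ n * k z) z) :
    ∃ G : ℂ → ℂ, AnalyticAt ℂ G c ∧ G c ≠ 0 ∧ ∀ᶠ z in 𝓝 c, F z = (z - c) ^ (n + 1) * G z := by
  have hFan : AnalyticAt ℂ F c := by
    obtain ⟨U, hU, hUo, hcU⟩ := _root_.eventually_nhds_iff.1 hF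
    exact DifferentiableOn.analyticAt
      (fun z hz => (hU z hz).differentiableAt.differentiableWithinAt) (hUo.mem_nhds hcU)
  have hderiv : analyticOrderAt (deriv F) c = n := by
    have han : AnalyticAt ℂ (fun z => (z - c) ^ n * k z) c := by fun_prop
    rw [analyticOrderAt_congr (hF.mono fun z hz => hz.deriv), han.analyticOrderAt_eq_natCast]
    exact ⟨k, hk, hkc, .of_forall fun z => rfl⟩
  have horder : analyticOrderAt F c = (n + 1 : ℕ) := by
    rw [Nat.cast_add_one, analyticOrderAt_deriv_eq_iff hFan hFc]
    exact hderiv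
  exact hFan.analyticOrderAt_eq_natCast.1 horder

theorem exists_pow_eq_of_ne_zero {G : ℂ → ℂ} {c : ℂ} (hG : AnalyticAt ℂ G c) (hGc : G c ≠ 0)
    {n : ℕ} (hn : n ≠ 0) : ∃ g : ℂ → ℂ, AnalyticAt ℂ g c ∧ ∀ z, g z ^ n = G z := by
  obtain ⟨s, hs⟩ := IsAlgClosed.exists_pow_nat_eq (G c) (Nat.pos_of_ne_zero hn)
  refine ⟨fun z => s * (G z / G c) ^ (n⁻¹ : ℂ), ?_, fun z => ?_⟩
  · refine analyticAt_const.mul ((hG.div analyticAt_const hGc).cpow analyticAt_const ?_)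
    simp [hGc]
  · rw [mul_pow, cpow_nat_inv_pow _ hn, hs]
    field_simp

theorem exists_sq_eq_of_hasDerivAt {F k : ℂ → ℂ} {c : ℂ} (hk : AnalyticAt ℂ k c) (hkc : k c ≠ 0)
    (hFc : F c = 0) (hF : ∀ᶠ z in 𝓝 c, HasDerivAt F ((z - c) * k z) z) :
    ∃ ξ : ℂ → ℂ, AnalyticAt ℂ ξ c ∧ ξ c = 0 ∧ deriv ξ c ≠ 0 ∧ ∀ᶠ z in 𝓝 c, ξ z ^ 2 = F z := by
  obtain ⟨G, hG, hGc, hFG⟩ :=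
    exists_eq_pow_succ_mul_of_hasDerivAt (n := 1) hk hkc hFc (by simpa using hF)
  obtain ⟨g, hg, hgG⟩ := exists_pow_eq_of_ne_zero hG hGc two_ne_zero
  have hgc : g c ≠ 0 := fun h0 => hGc (by rw [← hgG, h0, zero_pow two_ne_zero])
  have hξ : HasDerivAt (fun z => (z - c) * g z) (g c) c := by
    simpa using ((hasDerivAt_id' c).sub_const c).fun_mul hg.differentiableAt.hasDerivAt
  refine ⟨fun z => (z - c) * g z, (analyticAt_id.sub analyticAt_const).mul hg, by simp,
    hξ.deriv ▸ hgc, hFG.mono fun z hz => ?_⟩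
  rw [hz, mul_pow, hgG]

theorem hasDerivAt_sqrt_two_mul_comp_of_hasDerivAt_sq {ξ : ℂ → ℂ} {z : ℝ → ℂ} {t : ℝ}
    {b ξ' : ℂ} (hb : b ≠ 0) (hξ : HasDerivAt ξ ξ' (z t))
    (hsq : HasDerivAt (fun w => ξ w ^ 2) b (z t)) (hz : HasDerivAt z b⁻¹ t) :
    HasDerivAt (fun s => (Real.sqrt 2 : ℂ) * ξ (z s)) (1 / ((Real.sqrt 2 : ℂ) * ξ (z t))) t := by
  have hderiv_sq : 2 * ξ (z t) * ξ' = b := by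
    simpa using (hξ.pow 2).unique hsq
  subst hderiv_sq
  have hξ0 : ξ (z t) ≠ 0 := right_ne_zero_of_mul (left_ne_zero_of_mul hb)
  have hξ'0 : ξ' ≠ 0 := right_ne_zero_of_mul hb
  have hsqrt : (Real.sqrt 2 : ℂ) * Real.sqrt 2 = 2 := by norm_cast; simp
  have hsqrt0 : (Real.sqrt 2 : ℂ) ≠ 0 := by norm_cast; positivity
  refine ((hξ.comp t hz).const_mul _).congr_deriv ?_
  field_simp
  linear_combination hsqrt

/-- Normal form for the differential equation `dz/dt = i/(z h(z))` near the singular point: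
there is a biholomorphic change of coordinates `ξ` with `ξ(0) = 0` such that `ω = √2 ξ(z)`
solves `dω/dt = 1/ω` whenever `z` solves the original equation. -/
theorem stmt_3 (R : ℝ) (hR : 0 < R) (h : ℂ → ℂ)
    (hh : AnalyticOnNhd ℂ h (ball (0 : ℂ) R))
    (hne : ∀ z ∈ ball (0 : ℂ) R, h z ≠ 0) :
    ∃ r : ℝ, 0 < r ∧ ball (0 : ℂ) r ⊆ ball (0 : ℂ) R ∧
      ∃ ξ : ℂ → ℂ,
        AnalyticOnNhd ℂ ξ (ball (0 : ℂ) r) ∧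
        Set.InjOn ξ (ball (0 : ℂ) r) ∧
        IsOpen (ξ '' ball (0 : ℂ) r) ∧
        ξ 0 = 0 ∧
        -- every solution of `dz/dt = i/(z h(z))` in the disk is transformed by
        -- `ω = √2 ξ(z)` into a solution of `dω/dt = 1/ω`.
        ∀ (z : ℝ → ℂ) (t : ℝ), z t ∈ ball (0 : ℂ) r → z t ≠ 0 →
          HasDerivAt z (Complex.I / (z t * h (z t))) t →
          HasDerivAt (fun s => (Real.sqrt 2 : ℂ) * ξ (z s))
            (1 / ((Real.sqrt 2 : ℂ) * ξ (z t))) t := by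
  have h0 : (0 : ℂ) ∈ ball (0 : ℂ) R := mem_ball_self hR
  have hdiff : DifferentiableOn ℂ (fun z => z * (-I * h z)) (ball 0 R) :=
    differentiableOn_id.mul ((differentiableOn_const (-I)).mul hh.differentiableOn)
  obtain ⟨F, hF0, hF⟩ := hdiff.isExactOn_ball.with_val_at 0 0
  obtain ⟨ξ, hξ, hξ0, hξ'0, hξF⟩ := exists_sq_eq_of_hasDerivAt
    (analyticAt_const.mul (hh 0 h0)) (mul_ne_zero (neg_ne_zero.2 I_ne_zero) (hne 0 h0)) hF0
    (by filter_upwards [isOpen_ball.mem_nhds h0] with z hz using by simpa using hF z hz)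
  obtain ⟨U, hU, hinj, hopen⟩ := (hξ.hasStrictDerivAt.hasStrictFDerivAt_equiv hξ'0)
    |>.exists_mem_nhds_injOn_isOpen_image
  have hnear : ∀ᶠ w in 𝓝 0, w ∈ U ∧ w ∈ ball 0 R ∧ AnalyticAt ℂ ξ w ∧ ξ w ^ 2 = F w := by
    filter_upwards [hU, isOpen_ball.mem_nhds h0, hξ.eventually_analyticAt, hξF]
      with w hwU hwR hwξ hwF using ⟨hwU, hwR, hwξ, hwF⟩
  obtain ⟨r, hr, hball⟩ := Metric.eventually_nhds_iff_ball.1 hnear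
  have hrR : ball (0 : ℂ) r ⊆ ball 0 R := fun w hw => (hball w hw).2.1
  refine ⟨r, hr, hrR, ξ, fun w hw => (hball w hw).2.2.1, hinj.mono fun w hw => (hball w hw).1,
    hopen _ (fun w hw => (hball w hw).1) isOpen_ball, hξ0, fun z t hzr hz0 hz => ?_⟩
  have hsq : HasDerivAt (fun w => ξ w ^ 2) (-I * (z t * h (z t))) (z t) := by
    refine ((hF _ (hrR hzr)).congr_deriv (by ring)).congr_of_eventuallyEq ?_
    filter_upwards [isOpen_ball.mem_nhds hzr] with w hw using (hball w hw).2.2.2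
  exact hasDerivAt_sqrt_two_mul_comp_of_hasDerivAt_sq
    (mul_ne_zero (neg_ne_zero.2 I_ne_zero) (mul_ne_zero hz0 (hne _ (hrR hzr))))
    (hball _ hzr).2.2.1.differentiableAt.hasDerivAt hsq
    (hz.congr_deriv (by rw [mul_inv, inv_neg, inv_I, neg_neg, div_eq_mul_inv]))
end

section
/- Let α be irrational, T x = x + α on 𝕋, and let f_pl(x) = ∑_{i=1}^k d_i {x − β_i} + c be piecewise linear (where {·} is the fractional part). Then for x < y in [0,1) and every n ≥ 0: f_pl^{(n)}(y) − f_pl^{(n)}(x) = n·S·(y − x) − d̄_n, where S = ∑_{i=1}^k d_i and d̄_n = ∑ d_i, the sum taken over all pairs (i, j) with 1 ≤ i ≤ k, 0 ≤ j < n such that {β_i − jα} ∈ (x, y]. -/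
/-!
For `0 ≤ x < y < 1`, each sawtooth `z ↦ {z - γ}` increases by exactly `y - x` between `x` and
`y` except that it drops by `1` when its discontinuity `{γ}` lies in `(x, y]`. Applied to every
term `d_i {x + jα - β_i}` of the Birkhoff sum this gives the formula, the discontinuity being
`{β_i - jα}`.
-/

open Finset

section Sawtooth

variable {R : Type*} [Field R] [LinearOrder R] [IsStrictOrderedRing R] [FloorRing R]

theorem Int.fract_sub_eq_ite {a u : R} (ha : a ∈ Set.Ico 0 1) (hu : u ∈ Set.Ico 0 1) :
    Int.fract (a - u) = a - u + if a < u then 1 else 0 := by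
  obtain ⟨ha0, ha1⟩ := ha
  obtain ⟨hu0, hu1⟩ := hu
  split_ifs with h
  · rw [← Int.fract_add_one, Int.fract_eq_self]
    constructor <;> linarith
  · rw [add_zero, Int.fract_eq_self]
    constructor <;> linarith

theorem Int.fract_sub_fract_right (a t : R) : Int.fract (a - Int.fract t) = Int.fract (a - t) :=
  Int.fract_eq_fract.2 ⟨⌊t⌋, by rw [← Int.self_sub_fract t]; ring⟩

theorem Int.fract_sub_sub_fract_sub {x y : R} (t : R) (hx : 0 ≤ x) (hxy : x < y) (hy : y < 1) :
    Int.fract (y - t) - Int.fract (x - t) =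
      (y - x) - if Int.fract t ∈ Set.Ioc x y then 1 else 0 := by
  have hu : Int.fract t ∈ Set.Ico 0 1 := ⟨Int.fract_nonneg t, Int.fract_lt_one t⟩
  rw [← Int.fract_sub_fract_right y, ← Int.fract_sub_fract_right x,
    Int.fract_sub_eq_ite ⟨by linarith, hy⟩ hu, Int.fract_sub_eq_ite ⟨hx, by linarith⟩ hu]
  simp only [Set.mem_Ioc]
  split_ifs <;> grind

theorem sum_mul_fract_sub_sub_sum_mul_fract_sub {ι : Type*} (s : Finset ι) (d γ : ι → R)
    {x y : R} (hx : 0 ≤ x) (hxy : x < y) (hy : y < 1) :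
    ∑ i ∈ s, d i * Int.fract (y - γ i) - ∑ i ∈ s, d i * Int.fract (x - γ i) =
      (∑ i ∈ s, d i) * (y - x) - ∑ i ∈ s, if Int.fract (γ i) ∈ Set.Ioc x y then d i else 0 := by
  rw [← sum_sub_distrib, sum_mul, ← sum_sub_distrib]
  refine sum_congr rfl fun i _ => ?_
  rw [← mul_sub, Int.fract_sub_sub_fract_sub (γ i) hx hxy hy]
  split_ifs <;> ring

end Sawtooth

theorem stmt_10_general (α : ℝ) (k : ℕ) (β d : Fin k → ℝ) (c : ℝ)
    (fpl : ℝ → ℝ) (hfpl : ∀ z : ℝ, fpl z = (∑ i, d i * Int.fract (z - β i)) + c)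
    (x y : ℝ) (hx : 0 ≤ x) (hxy : x < y) (hy : y < 1) (n : ℕ) :
    (∑ j ∈ Finset.range n, fpl (y + j * α)) - (∑ j ∈ Finset.range n, fpl (x + j * α)) =
      (n : ℝ) * (∑ i, d i) * (y - x) -
        ∑ i, ∑ j ∈ Finset.range n,
          if Int.fract (β i - j * α) ∈ Set.Ioc x y then d i else 0 := by
  have hstep : ∀ j : ℕ, fpl (y + j * α) - fpl (x + j * α) =
      (∑ i, d i) * (y - x) - ∑ i, if Int.fract (β i - j * α) ∈ Set.Ioc x y then d i else 0 := by
    intro j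
    have hshift (z : ℝ) (i : Fin k) : z + j * α - β i = z - (β i - j * α) := by ring
    simp only [hfpl, add_sub_add_right_eq_sub, hshift]
    exact sum_mul_fract_sub_sub_sum_mul_fract_sub univ d _ hx hxy hy
  rw [← sum_sub_distrib, sum_congr rfl fun j _ => hstep j, sum_sub_distrib, sum_comm (s := univ),
    sum_const, card_range, nsmul_eq_mul, mul_assoc]

/-- Exact Birkhoff-sum formula for the piecewise linear part: with
`f_pl(x) = ∑ i, d_i {x - β_i} + c`, `S = ∑ i, d_i` and the rotation by `α`,
`f_pl^{(n)}(y) - f_pl^{(n)}(x) = n S (y-x) - d̄_n`, where `d̄_n` sums the jumps `d_i`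
over all pairs `(i,j)`, `j < n`, with `{β_i - jα} ∈ (x, y]`. -/
theorem stmt_10 (α : ℝ) (hα : Irrational α) (k : ℕ) (β d : Fin k → ℝ) (c : ℝ)
    (fpl : ℝ → ℝ) (hfpl : ∀ z : ℝ, fpl z = (∑ i, d i * Int.fract (z - β i)) + c)
    (x y : ℝ) (hx : 0 ≤ x) (hxy : x < y) (hy : y < 1) (n : ℕ) :
    (∑ j ∈ Finset.range n, fpl (y + j * α)) - (∑ j ∈ Finset.range n, fpl (x + j * α)) =
      (n : ℝ) * (∑ i, d i) * (y - x) -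
        ∑ i, ∑ j ∈ Finset.range n,
          if Int.fract (β i - j * α) ∈ Set.Ioc x y then d i else 0 :=
  stmt_10_general α k β d c fpl hfpl x y hx hxy hy n
end

section
/- Let T : (X, B, μ) → (X, B, μ) be ergodic and f ∈ L¹(X, μ) with f ≥ c > 0. If the special flow T^f over T under f is partially rigid along a sequence t_n → +∞ with constant u ∈ (0,1], then for every 0 < ε < c: liminf_{n→∞} μ{x ∈ X : ∃ j ∈ ℕ, |f^{(j)}(x) − t_n| < ε} ≥ u. -/
/-!
A point `(x, s)` of the slab `X × [0, ε)` whose image under `T^f_t` lies in the slab again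
has been lifted by `t` to within `ε` of a roof level `f^{(j)}(x) = birkhoffSum T f j x`, so `x`
lies in `B_t = {x : ∃ j, |f^{(j)}(x) - t| < ε}` (`nearRoofLevel`). Hence the slab returns to
itself in measure at most `ε · μ B_t`, while partial rigidity gives at least `u · ε` along `t_n`;
dividing by `ε` gives the bound.
-/

open MeasureTheory Filter Set

namespace SpecialFlow

variable {X : Type*}

def nearRoofLevel (T : X → X) (f : X → ℝ) (t ε : ℝ) : Set X :=
  {x | ∃ j : ℕ, |birkhoffSum T f j x - t| < ε}

theorem slab_inter_preimage_subset {T : X → X} {f : X → ℝ} {Φ : X × ℝ → X × ℝ} {t ε : ℝ}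
    (hΦ : ∀ x s, 0 ≤ s → s < ε → ∃ j : ℕ, Φ (x, s) = (T^[j] x, s + t - birkhoffSum T f j x)) :
    (univ ×ˢ Ico 0 ε) ∩ Φ ⁻¹' (univ ×ˢ Ico 0 ε) ⊆ nearRoofLevel T f t ε ×ˢ Ico 0 ε := by
  rintro ⟨x, s⟩ ⟨⟨-, hs0, hsε⟩, hΦs⟩
  obtain ⟨j, hj⟩ := hΦ x s hs0 hsε
  rw [mem_preimage, hj] at hΦs
  obtain ⟨-, hr0, hrε⟩ := hΦs
  exact ⟨⟨j, abs_sub_lt_iff.mpr ⟨by linarith, by linarith⟩⟩, hs0, hsε⟩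

theorem prod_volume_prod_Ico_zero [MeasurableSpace X] (μ : Measure X) [SFinite μ] (B : Set X)
    (ε : ℝ) : μ.prod volume (B ×ˢ Ico 0 ε) = μ B * ENNReal.ofReal ε := by
  rw [Measure.prod_prod, Real.volume_Ico, sub_zero]

end SpecialFlow

open SpecialFlow

theorem stmt_12_general {X : Type*} [MeasurableSpace X] (μ : Measure X) [IsProbabilityMeasure μ]
    (T : X → X)
    (f : X → ℝ) (c : ℝ) (hfc : ∀ x, c ≤ f x)
    -- the special flow space and measure
    (Xf : Set (X × ℝ)) (hXf : Xf = {p : X × ℝ | 0 ≤ p.2 ∧ p.2 < f p.1})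
    (μf : Measure (X × ℝ)) (hμf : μf = (μ.prod volume).restrict Xf)
    -- the special flow for positive times: vertical motion with identification
    -- `(x, f x) ∼ (T x, 0)`
    (Tf : ℝ → X × ℝ → X × ℝ)
    (hTf : ∀ t : ℝ, 0 ≤ t → ∀ x : X, ∀ s : ℝ, 0 ≤ s → s < f x →
      ∃ n : ℕ, (∑ i ∈ Finset.range n, f (T^[i] x)) ≤ s + t ∧
        s + t < (∑ i ∈ Finset.range (n + 1), f (T^[i] x)) ∧
        Tf t (x, s) = (T^[n] x, s + t - ∑ i ∈ Finset.range n, f (T^[i] x)))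
    -- partial rigidity along `t_n → +∞` with constant `u`
    (t : ℕ → ℝ) (ht : Tendsto t atTop atTop) (u : ℝ)
    (hrig : ∀ D : Set (X × ℝ), MeasurableSet D → D ⊆ Xf →
      ENNReal.ofReal u * μf D ≤ atTop.liminf fun n => μf (D ∩ Tf (t n) ⁻¹' D)) :
    ∀ ε : ℝ, 0 < ε → ε < c →
      ENNReal.ofReal u ≤ atTop.liminf fun n =>
        μ {x : X | ∃ j : ℕ, |(∑ i ∈ Finset.range j, f (T^[i] x)) - t n| < ε} := by
  intro ε hε hεc
  set A : Set (X × ℝ) := univ ×ˢ Ico 0 ε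
  have hA : MeasurableSet A := MeasurableSet.univ.prod measurableSet_Ico
  have hbelow_roof : ∀ x s, s < ε → s < f x := fun x s hs => (hs.trans hεc).trans_le (hfc x)
  have hAXf : A ⊆ Xf := by
    rintro ⟨x, s⟩ ⟨-, hs0, hsε⟩
    exact hXf ▸ ⟨hs0, hbelow_roof x s hsε⟩
  have hμfA : μf A = ENNReal.ofReal ε := by
    rw [hμf, Measure.restrict_apply hA, inter_eq_left.mpr hAXf, prod_volume_prod_Ico_zero,
      measure_univ, one_mul]
  have hreturn : ∀ᶠ n in atTop,
      μf (A ∩ Tf (t n) ⁻¹' A) ≤ μ (nearRoofLevel T f (t n) ε) * ENNReal.ofReal ε := by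
    filter_upwards [ht.eventually_ge_atTop 0] with n htn
    have hsub : A ∩ Tf (t n) ⁻¹' A ⊆ nearRoofLevel T f (t n) ε ×ˢ Ico 0 ε := by
      refine slab_inter_preimage_subset fun x s hs0 hsε => ?_
      obtain ⟨j, -, -, hj⟩ := hTf (t n) htn x s hs0 (hbelow_roof x s hsε)
      exact ⟨j, hj⟩
    calc μf (A ∩ Tf (t n) ⁻¹' A) ≤ μ.prod volume (A ∩ Tf (t n) ⁻¹' A) :=
          hμf ▸ Measure.restrict_le_self _
      _ ≤ _ := (measure_mono hsub).trans_eq (prod_volume_prod_Ico_zero μ _ ε)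
  have hεpos : ENNReal.ofReal ε ≠ 0 := ENNReal.ofReal_ne_zero_iff.mpr hε
  have key : ENNReal.ofReal ε * ENNReal.ofReal u ≤
      ENNReal.ofReal ε * atTop.liminf fun n => μ (nearRoofLevel T f (t n) ε) := by
    calc ENNReal.ofReal ε * ENNReal.ofReal u = ENNReal.ofReal u * μf A := by rw [hμfA, mul_comm]
      _ ≤ atTop.liminf fun n => μf (A ∩ Tf (t n) ⁻¹' A) := hrig A hA hAXf
      _ ≤ atTop.liminf fun n => μ (nearRoofLevel T f (t n) ε) * ENNReal.ofReal ε :=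
          liminf_le_liminf hreturn
      _ = _ := ENNReal.liminf_mul_const_of_ne_zero_of_ne_top hεpos ENNReal.ofReal_ne_top
  exact (ENNReal.mul_le_mul_iff_right hεpos ENNReal.ofReal_ne_top).mp key

/-- If the special flow `T^f` over an ergodic `T` with roof `f ≥ c > 0` is partially rigid
along `t_n → +∞` with constant `u`, then for every `0 < ε < c`,
`liminf μ{x : ∃ j, |f^{(j)}(x) - t_n| < ε} ≥ u`. -/
theorem stmt_12 {X : Type*} [MeasurableSpace X] (μ : Measure X) [IsProbabilityMeasure μ]
    (T : X → X) (hT : MeasurePreserving T μ μ)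
    (hTerg : ∀ A : Set X, MeasurableSet A → T ⁻¹' A = A → μ A = 0 ∨ μ A = 1)
    (f : X → ℝ) (hfL1 : Integrable f μ) (c : ℝ) (hc : 0 < c) (hfc : ∀ x, c ≤ f x)
    -- the special flow space and measure
    (Xf : Set (X × ℝ)) (hXf : Xf = {p : X × ℝ | 0 ≤ p.2 ∧ p.2 < f p.1})
    (μf : Measure (X × ℝ)) (hμf : μf = (μ.prod volume).restrict Xf)
    -- the special flow for positive times: vertical motion with identification
    -- `(x, f x) ∼ (T x, 0)`
    (Tf : ℝ → X × ℝ → X × ℝ)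
    (hTf : ∀ t : ℝ, 0 ≤ t → ∀ x : X, ∀ s : ℝ, 0 ≤ s → s < f x →
      ∃ n : ℕ, (∑ i ∈ Finset.range n, f (T^[i] x)) ≤ s + t ∧
        s + t < (∑ i ∈ Finset.range (n + 1), f (T^[i] x)) ∧
        Tf t (x, s) = (T^[n] x, s + t - ∑ i ∈ Finset.range n, f (T^[i] x)))
    -- partial rigidity along `t_n → +∞` with constant `u`
    (t : ℕ → ℝ) (ht : Tendsto t atTop atTop) (u : ℝ) (hu0 : 0 < u) (hu1 : u ≤ 1)
    (hrig : ∀ D : Set (X × ℝ), MeasurableSet D → D ⊆ Xf →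
      ENNReal.ofReal u * μf D ≤ atTop.liminf fun n => μf (D ∩ Tf (t n) ⁻¹' D)) :
    ∀ ε : ℝ, 0 < ε → ε < c →
      ENNReal.ofReal u ≤ atTop.liminf fun n =>
        μ {x : X | ∃ j : ℕ, |(∑ i ∈ Finset.range j, f (T^[i] x)) - t n| < ε} :=
  stmt_12_general μ T f c hfc Xf hXf μf hμf Tf hTf t ht u hrig
end
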